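/- Barlow–Proschan importance equals the Shapley-type combinatorial formula: for every structure function φ on n components and every index i, the integral importance I_i^{BP}(φ) = ∫₀¹ (h(1_i,(p,…,p)) − h(0_i,(p,…,p))) dp equals Σ_{r=1}^{n} n_r(i) · (r−1)!(n−r)!/n!. -/

import Mathlib

/-!
Multilinearity of `h` in coordinate `i` gives
`h(1_i, p) - h(0_i, p) = ∑_{x_i = 0} p ^ |x| (1 - p) ^ (n - 1 - |x|) (φ(1_i, x) - φ(0_i, x))`.
Integrating term by term with the Beta integral `∫₀¹ p^a (1 - p)^b = a! b! / (a + b + 1)!` and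
grouping the states by `|x| = r - 1` produces the Shapley weights `(r - 1)! (n - r)! / n!`.
-/

/-- The reliability function (multilinear extension) of a structure function φ. -/
def rel (n : ℕ) (φ : (Fin n → Bool) → Bool) (p : Fin n → ℝ) : ℝ :=
  ∑ x : Fin n → Bool,
    (∏ j : Fin n, if x j then p j else 1 - p j) * (if φ x then 1 else 0)

/-- The number `n_r(i)` of critical path vectors of size `r` for component `i`. -/
def ncrit (n : ℕ) (φ : (Fin n → Bool) → Bool) (i : Fin n) (r : ℕ) : ℤ :=
  ∑ x ∈ Finset.univ.filter (fun x : Fin n → Bool =>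
      x i = false ∧
        (Finset.univ.filter (fun j : Fin n => j ≠ i ∧ x j = true)).card = r - 1),
    ((if φ (Function.update x i true) then (1 : ℤ) else 0)
      - (if φ (Function.update x i false) then (1 : ℤ) else 0))

open Finset Function

section BoolCoordinate

variable {ι : Type*} [Fintype ι] [DecidableEq ι]

def numWorkingExcept (i : ι) (x : ι → Bool) : ℕ := #{j | j ≠ i ∧ x j = true}

theorem numWorkingExcept_lt_card (i : ι) (x : ι → Bool) :
    numWorkingExcept i x < Fintype.card ι :=
  card_lt_univ_of_notMem (x := i) (by simp)

theorem Fintype.sum_eq_sum_filter_update_bool {M : Type*} [AddCommMonoid M] (i : ι)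
    (F : (ι → Bool) → M) :
    ∑ x, F x = ∑ x with x i = false, (F (update x i false) + F (update x i true)) := by
  rw [sum_add_distrib, ← sum_filter_add_sum_filter_not univ (fun x => x i = false)]
  congr 1
  · refine Finset.sum_congr rfl fun x hx => ?_
    rw [← (mem_filter.1 hx).2, update_eq_self]
  · refine sum_nbij' (update · i false) (update · i true) ?_ ?_ ?_ ?_ fun x hx => ?_
    any_goals intro x hx; simp_all
    have hxi : x i = true := by simpa using (mem_filter.1 hx).2
    rw [update_idem, ← hxi, update_eq_self]

theorem prod_ite_update_eq_mul_prod_erase (q : ι → ℝ) (x : ι → Bool) (i : ι) (t : ℝ)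
    (b : Bool) :
    ∏ j, (if update x i b j then update q i t j else 1 - update q i t j)
      = (if b then t else 1 - t) * ∏ j ∈ univ.erase i, (if x j then q j else 1 - q j) := by
  rw [← mul_prod_erase univ _ (mem_univ i)]
  simp only [update_self]
  congr 1
  refine prod_congr rfl fun j hj => ?_
  simp only [update_of_ne (ne_of_mem_erase hj)]

theorem prod_erase_ite_eq_pow_mul_pow (x : ι → Bool) (i : ι) (p : ℝ) :
    ∏ j ∈ univ.erase i, (if x j then p else 1 - p)
      = p ^ numWorkingExcept i x * (1 - p) ^ (Fintype.card ι - 1 - numWorkingExcept i x) := by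
  have hon : #((univ.erase i).filter (fun j => x j = true)) = numWorkingExcept i x := by
    rw [numWorkingExcept]
    congr 1
    ext j
    simp [and_comm]
  have hcard := card_filter_add_card_filter_not (s := univ.erase i) (fun j => x j = true)
  rw [card_erase_of_mem (mem_univ i), card_univ, hon] at hcard
  rw [prod_ite, prod_const, prod_const, hon]
  congr 2
  omega

end BoolCoordinate

theorem integral_pow_mul_one_sub_pow (a b : ℕ) :
    ∫ x in (0 : ℝ)..1, x ^ a * (1 - x) ^ b
      = a.factorial * b.factorial / (a + b + 1).factorial := by
  have hre (m : ℕ) : 0 < ((m : ℂ) + 1).re := by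
    simp only [Complex.add_re, Complex.natCast_re, Complex.one_re]
    positivity
  have hGamma := Complex.Gamma_mul_Gamma_eq_betaIntegral (hre a) (hre b)
  have hsum : (a : ℂ) + 1 + ((b : ℂ) + 1) = ((a + b + 1 : ℕ) : ℂ) + 1 := by push_cast; ring
  have hbeta : Complex.betaIntegral (a + 1) (b + 1)
      = ((∫ x in (0 : ℝ)..1, x ^ a * (1 - x) ^ b : ℝ) : ℂ) := by
    rw [Complex.betaIntegral, ← intervalIntegral.integral_ofReal]
    simp only [add_sub_cancel_right, Complex.cpow_natCast]
    push_cast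
    rfl
  rw [hsum, hbeta] at hGamma
  simp only [Complex.Gamma_nat_eq_factorial] at hGamma
  rw [eq_div_iff (by positivity), mul_comm]
  exact_mod_cast hGamma.symm

theorem Finset.sum_fiberwise_Icc_one_of_lt {α M : Type*} [AddCommMonoid M] (s : Finset α)
    (c : α → ℕ) {n : ℕ} (hc : ∀ x ∈ s, c x < n) (f : α → M) :
    ∑ x ∈ s, f x = ∑ r ∈ Icc 1 n, ∑ x ∈ s with c x = r - 1, f x := by
  rw [← sum_fiberwise_of_maps_to (g := (c · + 1)) (t := Icc 1 n)
    fun x hx => by have hlt := hc x hx; simp only [mem_Icc]; omega]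
  refine Finset.sum_congr rfl fun r hr => Finset.sum_congr ?_ fun _ _ => rfl
  have hr1 := (mem_Icc.1 hr).1
  exact filter_congr fun x _ => by omega

section Reliability

variable {n : ℕ} (φ : (Fin n → Bool) → Bool)

theorem rel_update (q : Fin n → ℝ) (i : Fin n) (t : ℝ) :
    rel n φ (update q i t) = ∑ x with x i = false,
      (∏ j ∈ univ.erase i, if x j then q j else 1 - q j) *
        ((1 - t) * (if φ (update x i false) then 1 else 0)
          + t * (if φ (update x i true) then 1 else 0)) := by
  rw [rel, Fintype.sum_eq_sum_filter_update_bool i]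
  refine sum_congr rfl fun x _ => ?_
  simp only [prod_ite_update_eq_mul_prod_erase, Bool.false_eq_true, if_true, if_false]
  ring

theorem rel_update_one_sub_rel_update_zero (q : Fin n → ℝ) (i : Fin n) :
    rel n φ (update q i 1) - rel n φ (update q i 0) = ∑ x with x i = false,
      (∏ j ∈ univ.erase i, if x j then q j else 1 - q j) *
        ((if φ (update x i true) then 1 else 0) - (if φ (update x i false) then 1 else 0)) := by
  rw [rel_update, rel_update, ← sum_sub_distrib]
  refine sum_congr rfl fun x _ => ?_
  ring

theorem integral_rel_update_one_sub_rel_update_zero (i : Fin n) :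
    ∫ p in (0 : ℝ)..1,
        (rel n φ (update (fun _ => p) i 1) - rel n φ (update (fun _ => p) i 0))
      = ∑ x with x i = false, ((numWorkingExcept i x).factorial : ℝ)
          * (n - 1 - numWorkingExcept i x).factorial / n.factorial
          * ((if φ (update x i true) then 1 else 0)
            - (if φ (update x i false) then 1 else 0)) := by
  simp_rw [rel_update_one_sub_rel_update_zero, prod_erase_ite_eq_pow_mul_pow, Fintype.card_fin]
  rw [intervalIntegral.integral_finsetSum
    fun x _ => (by fun_prop : Continuous _).intervalIntegrable _ _]
  refine Finset.sum_congr rfl fun x _ => ?_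
  have hlt := numWorkingExcept_lt_card i x
  rw [Fintype.card_fin] at hlt
  rw [intervalIntegral.integral_mul_const, integral_pow_mul_one_sub_pow,
    show numWorkingExcept i x + (n - 1 - numWorkingExcept i x) + 1 = n by omega]

end Reliability

/-- Barlow–Proschan importance equals the Shapley-type combinatorial formula:
`∫₀¹ (h(1_i,(p,…,p)) − h(0_i,(p,…,p))) dp = Σ_{r=1}^{n} n_r(i)·(r−1)!(n−r)!/n!`. -/
theorem barlow_proschan_eq_shapley (n : ℕ) (φ : (Fin n → Bool) → Bool) (i : Fin n) :
    (∫ p in (0 : ℝ)..1,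
        (rel n φ (Function.update (fun _ => p) i 1)
          - rel n φ (Function.update (fun _ => p) i 0)))
      = ∑ r ∈ Finset.Icc 1 n,
          (ncrit n φ i r : ℝ) * (Nat.factorial (r - 1) : ℝ)
            * (Nat.factorial (n - r) : ℝ) / (Nat.factorial n : ℝ) := by
  rw [integral_rel_update_one_sub_rel_update_zero, sum_fiberwise_Icc_one_of_lt (M := ℝ) _
    (numWorkingExcept i) fun x _ => by simpa using numWorkingExcept_lt_card i x]
  refine Finset.sum_congr rfl fun r hr => ?_
  obtain ⟨hr1, hrn⟩ := mem_Icc.1 hr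
  rw [filter_filter, ncrit, Int.cast_sum, sum_mul, sum_mul, sum_div]
  refine Finset.sum_congr rfl fun x hx => ?_
  have hcard : numWorkingExcept i x = r - 1 := (mem_filter.1 hx).2.2
  rw [hcard, show n - 1 - (r - 1) = n - r by omega]
  push_cast
  ring
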